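/- arXiv:2112.15493 — 9 statements merged into one kernel-verified Lean document; each statement's English description precedes it below -/
import Mathlib

section
/- Let n ≥ 1 be an integer, let M̄ ≥ 1, let b₁, …, bₙ > 0 and e₁, …, eₙ > 0 be real numbers satisfying bᵢ > eⱼ for all i, j ∈ {1, …, n}, and let p_max > 0. Consider maximizing F(p, q) = Σᵢ₌₁ⁿ [ log₂(1 + M̄·bᵢ·pᵢ) + log₂(1 + eᵢ·qᵢ / (1 + eᵢ·pᵢ)) ] over all pᵢ ≥ 0, qᵢ ≥ 0 with Σᵢ (pᵢ + qᵢ) ≤ p_max. Then (i) a global maximizer exists, and (ii) every global maximizer (p*, q*) satisfies qᵢ* = 0 for all i = 1, …, n. -/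
/-!
Existence is compactness of the feasible set. For the support claim, moving the edge power `qᵢ`
of a group onto its centre user keeps the budget and strictly raises that group's rate:
`(1 + a p) (1 + e q / (1 + e p)) < 1 + a (p + q)` with `a = M̄ bᵢ` reduces to `e q < a q`,
which holds because `eᵢ < bᵢ ≤ M̄ bᵢ`. So a maximizer cannot give any edge user positive power.
-/

open Finset

noncomputable section

def groupRate (a e p q : ℝ) : ℝ :=
  Real.logb 2 (1 + a * p) + Real.logb 2 (1 + e * q / (1 + e * p))

theorem groupRate_lt_groupRate_add {a e p q : ℝ} (he : 0 ≤ e) (hea : e < a) (hp : 0 ≤ p)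
    (hq : 0 < q) : groupRate a e p q < groupRate a e (p + q) 0 := by
  have hden : 0 < 1 + e * p := by positivity
  have hcenter : 0 < 1 + a * p := by nlinarith
  unfold groupRate
  rw [mul_zero, zero_div, add_zero, Real.logb_one, add_zero,
    ← Real.logb_mul hcenter.ne' (by positivity)]
  refine Real.logb_lt_logb one_lt_two (by positivity) ?_
  rw [one_add_div hden.ne', mul_div_assoc', div_lt_iff₀ hden]
  nlinarith [mul_lt_mul_of_pos_right hea hq]

def shiftEdgePower {ι : Type*} [DecidableEq ι] (i : ι) (pq : (ι → ℝ) × (ι → ℝ)) :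
    (ι → ℝ) × (ι → ℝ) :=
  (Function.update pq.1 i (pq.1 i + pq.2 i), Function.update pq.2 i 0)

variable {ι : Type*} [Fintype ι]

def sumRate (a e p q : ι → ℝ) : ℝ := ∑ i, groupRate (a i) (e i) (p i) (q i)

def powerBudget (pmax : ℝ) : Set ((ι → ℝ) × (ι → ℝ)) :=
  {pq | (∀ i, 0 ≤ pq.1 i) ∧ (∀ i, 0 ≤ pq.2 i) ∧ ∑ i, (pq.1 i + pq.2 i) ≤ pmax}

theorem sumRate_lt_sumRate_shiftEdgePower [DecidableEq ι] {a e : ι → ℝ}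
    {pq : (ι → ℝ) × (ι → ℝ)} {i : ι} (he : 0 ≤ e i) (hea : e i < a i) (hp : 0 ≤ pq.1 i)
    (hq : 0 < pq.2 i) :
    sumRate a e pq.1 pq.2 < sumRate a e (shiftEdgePower i pq).1 (shiftEdgePower i pq).2 := by
  refine sum_lt_sum (fun j _ => ?_) ⟨i, mem_univ i, ?_⟩
  · rcases eq_or_ne j i with rfl | hji
    · simpa [shiftEdgePower] using (groupRate_lt_groupRate_add he hea hp hq).le
    · simp [shiftEdgePower, hji]
  · simpa [shiftEdgePower] using groupRate_lt_groupRate_add he hea hp hq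

theorem shiftEdgePower_mem_powerBudget [DecidableEq ι] {pmax : ℝ} {pq : (ι → ℝ) × (ι → ℝ)}
    (h : pq ∈ powerBudget pmax) (i : ι) : shiftEdgePower i pq ∈ powerBudget pmax := by
  obtain ⟨hp, hq, hsum⟩ := h
  refine ⟨fun j => ?_, fun j => ?_, le_of_eq_of_le (sum_congr rfl fun j _ => ?_) hsum⟩ <;>
    rcases eq_or_ne j i with rfl | hji <;> simp [shiftEdgePower, *, add_nonneg]

theorem zero_mem_powerBudget {pmax : ℝ} (h : 0 ≤ pmax) :
    (0 : (ι → ℝ) × (ι → ℝ)) ∈ powerBudget pmax :=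
  ⟨fun _ => le_rfl, fun _ => le_rfl, by simpa using h⟩

theorem powerBudget_subset_Ici (pmax : ℝ) :
    powerBudget pmax ⊆ Set.Ici (0 : (ι → ℝ) × (ι → ℝ)) :=
  fun _ h => ⟨h.1, h.2.1⟩

theorem isCompact_powerBudget (pmax : ℝ) : IsCompact (powerBudget (ι := ι) pmax) := by
  have hclosed : IsClosed (powerBudget (ι := ι) pmax) :=
    (isClosed_Ici.preimage continuous_fst).inter ((isClosed_Ici.preimage continuous_snd).inter
      (isClosed_le (f := fun pq : (ι → ℝ) × (ι → ℝ) => ∑ i, (pq.1 i + pq.2 i))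
        (by fun_prop) continuous_const))
  refine (isCompact_Icc (a := 0)
    (b := ((fun _ => pmax, fun _ => pmax) : (ι → ℝ) × (ι → ℝ)))).of_isClosed_subset hclosed ?_
  rintro pq ⟨hp, hq, hsum⟩
  refine ⟨⟨hp, hq⟩, fun i => ?_, fun i => ?_⟩ <;>
  · have := (single_le_sum (fun j _ => add_nonneg (hp j) (hq j)) (mem_univ i)).trans hsum
    linarith [hp i, hq i]

theorem continuousOn_sumRate {a e : ι → ℝ} (ha : ∀ i, 0 ≤ a i) (he : ∀ i, 0 ≤ e i) :
    ContinuousOn (fun pq : (ι → ℝ) × (ι → ℝ) => sumRate a e pq.1 pq.2) (Set.Ici 0) := by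
  have hpos : ∀ x y : ℝ, 0 ≤ x → 0 ≤ y → 0 < 1 + x * y := fun x y hx hy => by positivity
  have hedge : ∀ pq ∈ Set.Ici (0 : (ι → ℝ) × (ι → ℝ)), ∀ i,
      0 < 1 + e i * pq.2 i / (1 + e i * pq.1 i) := fun pq h i =>
    add_pos_of_pos_of_nonneg one_pos
      (div_nonneg (mul_nonneg (he i) (h.2 i)) (hpos _ _ (he i) (h.1 i)).le)
  unfold sumRate groupRate
  fun_prop (disch := first
    | exact fun pq h => (hpos _ _ (ha _) (h.1 _)).ne'
    | exact fun pq h => (hpos _ _ (he _) (h.1 _)).ne'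
    | exact fun pq h => (hedge pq h _).ne')

end

theorem noma_sum_rate_maximizer_zero_edge_power_general
    (n : ℕ) (Mbar : ℝ) (hM : 1 ≤ Mbar)
    (b e : Fin n → ℝ) (hb : ∀ i, 0 < b i) (he : ∀ i, 0 < e i)
    (hbe : ∀ i j, e j < b i) (pmax : ℝ) (hpmax : 0 < pmax)
    (F : (Fin n → ℝ) → (Fin n → ℝ) → ℝ)
    (hF : ∀ p q, F p q =
      ∑ i, (Real.logb 2 (1 + Mbar * b i * p i) +
            Real.logb 2 (1 + e i * q i / (1 + e i * p i))))
    (S : Set ((Fin n → ℝ) × (Fin n → ℝ)))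
    (hS : S = {pq | (∀ i, 0 ≤ pq.1 i) ∧ (∀ i, 0 ≤ pq.2 i) ∧
                    ∑ i, (pq.1 i + pq.2 i) ≤ pmax}) :
    (∃ x ∈ S, ∀ y ∈ S, F y.1 y.2 ≤ F x.1 x.2) ∧
    (∀ x ∈ S, (∀ y ∈ S, F y.1 y.2 ≤ F x.1 x.2) → ∀ i, x.2 i = 0) := by
  obtain rfl : F = sumRate (fun i => Mbar * b i) e := funext₂ hF
  obtain rfl : S = powerBudget pmax := hS
  have hgain : ∀ i, 0 ≤ Mbar * b i := fun i => mul_nonneg (zero_le_one.trans hM) (hb i).le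
  have hedge_lt_gain : ∀ i, e i < Mbar * b i := fun i =>
    (hbe i i).trans_le (le_mul_of_one_le_left (hb i).le hM)
  refine ⟨?_, fun x hx hmax i => ?_⟩
  · obtain ⟨x, hx, hmax⟩ := (isCompact_powerBudget pmax).exists_isMaxOn
      ⟨0, zero_mem_powerBudget hpmax.le⟩
      ((continuousOn_sumRate hgain fun i => (he i).le).mono (powerBudget_subset_Ici pmax))
    exact ⟨x, hx, fun y hy => hmax hy⟩
  · by_contra hq
    exact (hmax _ (shiftEdgePower_mem_powerBudget hx i)).not_gt
      (sumRate_lt_sumRate_shiftEdgePower (he i).le (hedge_lt_gain i) (hx.1 i)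
        ((hx.2.1 i).lt_of_ne' hq))

/-- Lemma 1: the NOMA sum-rate upper bound
`F(p, q) = Σᵢ [log₂(1 + M̄·bᵢ·pᵢ) + log₂(1 + eᵢ·qᵢ/(1 + eᵢ·pᵢ))]`
over the feasible set `{(p,q) : p ≥ 0, q ≥ 0, Σᵢ (pᵢ + qᵢ) ≤ p_max}`
has a global maximizer, and every global maximizer satisfies `q = 0`. -/
theorem noma_sum_rate_maximizer_zero_edge_power
    (n : ℕ) (hn : 1 ≤ n) (Mbar : ℝ) (hM : 1 ≤ Mbar)
    (b e : Fin n → ℝ) (hb : ∀ i, 0 < b i) (he : ∀ i, 0 < e i)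
    (hbe : ∀ i j, e j < b i) (pmax : ℝ) (hpmax : 0 < pmax)
    (F : (Fin n → ℝ) → (Fin n → ℝ) → ℝ)
    (hF : ∀ p q, F p q =
      ∑ i, (Real.logb 2 (1 + Mbar * b i * p i) +
            Real.logb 2 (1 + e i * q i / (1 + e i * p i))))
    (S : Set ((Fin n → ℝ) × (Fin n → ℝ)))
    (hS : S = {pq | (∀ i, 0 ≤ pq.1 i) ∧ (∀ i, 0 ≤ pq.2 i) ∧
                    ∑ i, (pq.1 i + pq.2 i) ≤ pmax}) :
    (∃ x ∈ S, ∀ y ∈ S, F y.1 y.2 ≤ F x.1 x.2) ∧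
    (∀ x ∈ S, (∀ y ∈ S, F y.1 y.2 ≤ F x.1 x.2) → ∀ i, x.2 i = 0) :=
  noma_sum_rate_maximizer_zero_edge_power_general n Mbar hM b e hb he hbe pmax hpmax F hF S hS
end

section
/- Let n ≥ 1 be an integer, let M̄ ≥ 1, let b₁, …, bₙ > 0 and e₁, …, eₙ > 0 be real numbers satisfying bᵢ > eⱼ for all i, j ∈ {1, …, n}, and let p_max > 0. Then the supremum of F(p, q) = Σᵢ₌₁ⁿ [ log₂(1 + M̄·bᵢ·pᵢ) + log₂(1 + eᵢ·qᵢ / (1 + eᵢ·pᵢ)) ] over all pᵢ ≥ 0, qᵢ ≥ 0 with Σᵢ (pᵢ + qᵢ) ≤ p_max equals the supremum of G(p) = Σᵢ₌₁ⁿ log₂(1 + M̄·bᵢ·pᵢ) over all pᵢ ≥ 0 with Σᵢ pᵢ ≤ p_max. -/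
/-!
Moving the whole power `qᵢ` of the cell-edge user onto the cell-center user of the same group never
lowers the rate of that group: with `A = M̄·bᵢ ≥ eᵢ`,
`(1 + A p)(1 + e q / (1 + e p)) ≤ 1 + A (p + q)`, the difference of the two sides being
`q (A - e) / (1 + e p)`. So every value of `F` is dominated by a value of `G` with the same total
power, while `G(p) = F(p, 0)`; the two sets have the same upper bounds, hence the same supremum.
-/

open Finset

lemma one_add_mul_mul_one_add_div_le {A e p q : ℝ} (he : 0 ≤ e) (heA : e ≤ A) (hp : 0 ≤ p)
    (hq : 0 ≤ q) : (1 + A * p) * (1 + e * q / (1 + e * p)) ≤ 1 + A * (p + q) := by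
  have hep : 0 < 1 + e * p := by positivity
  rw [mul_one_add, ← mul_div_assoc, ← le_sub_iff_add_le', div_le_iff₀ hep]
  nlinarith [mul_nonneg hq (sub_nonneg.2 heA)]

lemma logb_one_add_mul_add_logb_one_add_div_le {c A e p q : ℝ} (hc : 1 < c) (he : 0 ≤ e)
    (heA : e ≤ A) (hp : 0 ≤ p) (hq : 0 ≤ q) :
    Real.logb c (1 + A * p) + Real.logb c (1 + e * q / (1 + e * p)) ≤
      Real.logb c (1 + A * (p + q)) := by
  have hA : 0 ≤ A := he.trans heA
  rw [← Real.logb_mul (by positivity) (by positivity)]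
  exact Real.logb_le_logb_of_le hc (by positivity)
    (one_add_mul_mul_one_add_div_le he heA hp hq)

theorem noma_sum_rate_sup_eq_center_only_sup_general
    (n : ℕ) (Mbar : ℝ) (hM : 1 ≤ Mbar)
    (b e : Fin n → ℝ) (he : ∀ i, 0 < e i)
    (hbe : ∀ i j, e j < b i) (pmax : ℝ) :
    sSup {x : ℝ | ∃ p q : Fin n → ℝ, (∀ i, 0 ≤ p i) ∧ (∀ i, 0 ≤ q i) ∧
            (∑ i, (p i + q i)) ≤ pmax ∧
            x = ∑ i, (Real.logb 2 (1 + Mbar * b i * p i) +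
                      Real.logb 2 (1 + e i * q i / (1 + e i * p i)))} =
    sSup {x : ℝ | ∃ p : Fin n → ℝ, (∀ i, 0 ≤ p i) ∧ (∑ i, p i) ≤ pmax ∧
            x = ∑ i, Real.logb 2 (1 + Mbar * b i * p i)} := by
  have he_le : ∀ i, e i ≤ Mbar * b i := fun i =>
    (hbe i i).le.trans (le_mul_of_one_le_left ((he i).trans (hbe i i)).le hM)
  apply csSup_eq_csSup_of_forall_exists_le
  · rintro _ ⟨p, q, hp, hq, hsum, rfl⟩
    refine ⟨_, ⟨p + q, fun i => add_nonneg (hp i) (hq i), hsum, rfl⟩, ?_⟩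
    gcongr with i
    exact logb_one_add_mul_add_logb_one_add_div_le one_lt_two (he i).le (he_le i) (hp i) (hq i)
  · rintro _ ⟨p, hp, hsum, rfl⟩
    exact ⟨_, ⟨p, 0, hp, fun _ => le_rfl, by simpa using hsum, rfl⟩, by simp⟩

/-- Consequence of Lemma 1: the supremum of the NOMA sum-rate upper bound
`F(p,q)` over `{p ≥ 0, q ≥ 0, Σᵢ (pᵢ + qᵢ) ≤ p_max}` equals the supremum of
`G(p) = Σᵢ log₂(1 + M̄·bᵢ·pᵢ)` over `{p ≥ 0, Σᵢ pᵢ ≤ p_max}`. -/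
theorem noma_sum_rate_sup_eq_center_only_sup
    (n : ℕ) (hn : 1 ≤ n) (Mbar : ℝ) (hM : 1 ≤ Mbar)
    (b e : Fin n → ℝ) (hb : ∀ i, 0 < b i) (he : ∀ i, 0 < e i)
    (hbe : ∀ i j, e j < b i) (pmax : ℝ) (hpmax : 0 < pmax) :
    sSup {x : ℝ | ∃ p q : Fin n → ℝ, (∀ i, 0 ≤ p i) ∧ (∀ i, 0 ≤ q i) ∧
            (∑ i, (p i + q i)) ≤ pmax ∧
            x = ∑ i, (Real.logb 2 (1 + Mbar * b i * p i) +
                      Real.logb 2 (1 + e i * q i / (1 + e i * p i)))} =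
    sSup {x : ℝ | ∃ p : Fin n → ℝ, (∀ i, 0 ≤ p i) ∧ (∑ i, p i) ≤ pmax ∧
            x = ∑ i, Real.logb 2 (1 + Mbar * b i * p i)} :=
  noma_sum_rate_sup_eq_center_only_sup_general n Mbar hM b e he hbe pmax
end

section
/- Let M ≥ 1 and β₁ ≥ β₂ > 0 and p_max > 0 be real numbers. Then the supremum of R^NOMA(p₁, p₂) = log₂(1 + M·β₁·p₁) + log₂(1 + β₂·p₂ / (1 + β₂·p₁)) over all p₁ ≥ 0, p₂ ≥ 0 with p₁ + p₂ ≤ p_max equals log₂(1 + p_max·β₁·M), and it is attained at (p₁, p₂) = (p_max, 0). -/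
/-!
With cell-center gain `a = M β₁` and cell-edge gain `b = β₂`, the product of the two rate
arguments is `(1 + a p₁) (1 + b p₂ / (1 + b p₁)) = 1 + a (p₁ + p₂) - p₂ (a - b) / (1 + b p₁)`.
Since `a ≥ b`, moving all power to the cell-center user never lowers the sum rate, and the rate
is then largest when the whole budget is spent.
-/

open Real

noncomputable def nomaSumRate (a b p₁ p₂ : ℝ) : ℝ :=
  logb 2 (1 + a * p₁) + logb 2 (1 + b * p₂ / (1 + b * p₁))

lemma mul_one_add_div_le {a b x y : ℝ} (hb : 0 ≤ b) (hba : b ≤ a) (hx : 0 ≤ x) (hy : 0 ≤ y) :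
    (1 + a * x) * (1 + b * y / (1 + b * x)) ≤ 1 + a * (x + y) := by
  have hbx : 0 < 1 + b * x := by positivity
  rw [← sub_nonneg]
  have key : 1 + a * (x + y) - (1 + a * x) * (1 + b * y / (1 + b * x))
      = y * (a - b) / (1 + b * x) := by
    field_simp
    ring
  rw [key]
  exact div_nonneg (mul_nonneg hy (sub_nonneg.mpr hba)) hbx.le

lemma nomaSumRate_le {a b p₁ p₂ : ℝ} (hb : 0 ≤ b) (hba : b ≤ a) (hp₁ : 0 ≤ p₁) (hp₂ : 0 ≤ p₂) :
    nomaSumRate a b p₁ p₂ ≤ logb 2 (1 + a * (p₁ + p₂)) := by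
  have hb₁ : 0 < 1 + b * p₁ := by positivity
  have ha₁ : 0 < 1 + a * p₁ := by nlinarith
  have hsinr : 0 < 1 + b * p₂ / (1 + b * p₁) := by positivity
  rw [nomaSumRate, ← logb_mul ha₁.ne' hsinr.ne']
  exact logb_le_logb_of_le one_lt_two (mul_pos ha₁ hsinr) (mul_one_add_div_le hb hba hp₁ hp₂)

@[simp]
lemma nomaSumRate_zero_right (a b p : ℝ) : nomaSumRate a b p 0 = logb 2 (1 + a * p) := by
  simp [nomaSumRate]

theorem noma_two_user_max_sum_rate_general
    (M β₁ β₂ pmax : ℝ) (hM : 1 ≤ M) (hβ₂ : 0 < β₂) (hβ : β₂ ≤ β₁)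
    (R : ℝ → ℝ → ℝ)
    (hR : ∀ p₁ p₂, R p₁ p₂ =
      Real.logb 2 (1 + M * β₁ * p₁) +
      Real.logb 2 (1 + β₂ * p₂ / (1 + β₂ * p₁))) :
    (∀ p₁ p₂, 0 ≤ p₁ → 0 ≤ p₂ → p₁ + p₂ ≤ pmax →
      R p₁ p₂ ≤ Real.logb 2 (1 + pmax * β₁ * M)) ∧
    R pmax 0 = Real.logb 2 (1 + pmax * β₁ * M) := by
  have hR' : R = nomaSumRate (M * β₁) β₂ := funext₂ hR
  have hgain : β₂ ≤ M * β₁ := by nlinarith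
  have hbudget : 1 + pmax * β₁ * M = 1 + M * β₁ * pmax := by ring
  subst hR'
  refine ⟨fun p₁ p₂ hp₁ hp₂ hsum => ?_, by rw [nomaSumRate_zero_right, hbudget]⟩
  have hsum_pos : 0 < 1 + M * β₁ * (p₁ + p₂) := by nlinarith
  calc nomaSumRate (M * β₁) β₂ p₁ p₂ ≤ logb 2 (1 + M * β₁ * (p₁ + p₂)) :=
        nomaSumRate_le hβ₂.le hgain hp₁ hp₂
    _ ≤ logb 2 (1 + pmax * β₁ * M) :=
        logb_le_logb_of_le one_lt_two hsum_pos (by nlinarith)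

/-- Equation (22): in the two-user case, the supremum of the NOMA sum rate
`R(p₁,p₂) = log₂(1 + M·β₁·p₁) + log₂(1 + β₂·p₂/(1 + β₂·p₁))` over
`{p₁ ≥ 0, p₂ ≥ 0, p₁ + p₂ ≤ p_max}` equals `log₂(1 + p_max·β₁·M)`,
attained at `(p₁, p₂) = (p_max, 0)`. -/
theorem noma_two_user_max_sum_rate
    (M β₁ β₂ pmax : ℝ) (hM : 1 ≤ M) (hβ₂ : 0 < β₂) (hβ : β₂ ≤ β₁)
    (hpmax : 0 < pmax)
    (R : ℝ → ℝ → ℝ)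
    (hR : ∀ p₁ p₂, R p₁ p₂ =
      Real.logb 2 (1 + M * β₁ * p₁) +
      Real.logb 2 (1 + β₂ * p₂ / (1 + β₂ * p₁))) :
    (∀ p₁ p₂, 0 ≤ p₁ → 0 ≤ p₂ → p₁ + p₂ ≤ pmax →
      R p₁ p₂ ≤ Real.logb 2 (1 + pmax * β₁ * M)) ∧
    R pmax 0 = Real.logb 2 (1 + pmax * β₁ * M) :=
  noma_two_user_max_sum_rate_general M β₁ β₂ pmax hM hβ₂ hβ R hR
end

section
/- Let M > 2 and β₁ ≥ β₂ > 0 and p_max > 0 be real numbers. Define p₁* = min( p_max, (β₁ − β₂ + p_max·β₁·β₂·(M − 2)) / (2·β₁·β₂·(M − 2)) ) and p₂* = p_max − p₁*. Then (p₁*, p₂*) is a global maximizer of R^mMIMO(p₁, p₂) = log₂(1 + (M − 2)·β₁·p₁) + log₂(1 + (M − 2)·β₂·p₂) over all p₁ ≥ 0, p₂ ≥ 0 with p₁ + p₂ ≤ p_max. -/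
/-! With `a = (M-2)β₁` and `b = (M-2)β₂` the sum rate is `log₂` of the product
`(1 + a p₁)(1 + b p₂)`, which is increasing in `p₂`, so the whole budget is spent:
`p₂ = p_max - p₁`. The product is then a concave quadratic in `p₁`, equal to a constant minus
`a b (p₁ - v)²` with vertex `v = (a - b + a b p_max) / (2 a b)`, and over `p₁ ≤ p_max` it is
maximized at `min p_max v`. The condition `β₁ ≥ β₂` makes `v ≥ 0`, so this point is feasible. -/

open Real

noncomputable def budgetVertex (a b P : ℝ) : ℝ := (a - b + a * b * P) / (2 * a * b)

lemma budgetVertex_nonneg {a b P : ℝ} (hb : 0 < b) (hab : b ≤ a) (hP : 0 ≤ P) :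
    0 ≤ budgetVertex a b P := by
  have ha : 0 < a := hb.trans_le hab
  unfold budgetVertex
  have : 0 ≤ a * b * P := by positivity
  exact div_nonneg (by linarith) (by positivity)

lemma budgetVertex_mul_left {c a b P : ℝ} (hc : c ≠ 0) (ha : a ≠ 0) (hb : b ≠ 0) :
    budgetVertex (c * a) (c * b) P = (a - b + P * a * b * c) / (2 * a * b * c) := by
  unfold budgetVertex
  field_simp

lemma mul_budget_eq_sub_sq (a b P t : ℝ) (ha : a ≠ 0) (hb : b ≠ 0) :
    (1 + a * t) * (1 + b * (P - t)) =
      1 + b * P + a * b * budgetVertex a b P ^ 2 - a * b * (t - budgetVertex a b P) ^ 2 := by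
  unfold budgetVertex
  field_simp
  ring

lemma sq_min_sub_le_sq_sub {t P v : ℝ} (ht : t ≤ P) : (min P v - v) ^ 2 ≤ (t - v) ^ 2 := by
  rcases le_total v P with hvP | hPv
  · rw [min_eq_right hvP, sub_self, zero_pow two_ne_zero]
    exact sq_nonneg _
  · rw [min_eq_left hPv]
    nlinarith

lemma mul_budget_le_mul_budget_min_vertex {a b P p₁ p₂ : ℝ} (hb : 0 < b) (hab : b ≤ a)
    (h₁ : 0 ≤ p₁) (h₂ : 0 ≤ p₂) (h : p₁ + p₂ ≤ P) :
    (1 + a * p₁) * (1 + b * p₂) ≤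
      (1 + a * min P (budgetVertex a b P)) * (1 + b * (P - min P (budgetVertex a b P))) := by
  have ha : 0 < a := hb.trans_le hab
  have hp₂ : p₂ ≤ P - p₁ := by linarith
  calc (1 + a * p₁) * (1 + b * p₂) ≤ (1 + a * p₁) * (1 + b * (P - p₁)) := by gcongr
    _ = 1 + b * P + a * b * budgetVertex a b P ^ 2 - a * b * (p₁ - budgetVertex a b P) ^ 2 :=
        mul_budget_eq_sub_sq a b P p₁ ha.ne' hb.ne'
    _ ≤ 1 + b * P + a * b * budgetVertex a b P ^ 2 -
          a * b * (min P (budgetVertex a b P) - budgetVertex a b P) ^ 2 := by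
        have := sq_min_sub_le_sq_sub (v := budgetVertex a b P) (show p₁ ≤ P by linarith)
        exact sub_le_sub_left (mul_le_mul_of_nonneg_left this (by positivity)) _
    _ = _ := (mul_budget_eq_sub_sq a b P _ ha.ne' hb.ne').symm

lemma logb_add_logb_le_of_mul_le {b x y z w : ℝ} (hb : 1 < b) (hx : 0 < x) (hy : 0 < y)
    (hz : 0 < z) (hw : 0 < w) (h : x * y ≤ z * w) :
    logb b x + logb b y ≤ logb b z + logb b w := by
  rw [← logb_mul hx.ne' hy.ne', ← logb_mul hz.ne' hw.ne']
  exact logb_le_logb_of_le hb (mul_pos hx hy) h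

/-- Lemma 2: with `p₁* = min(p_max, (β₁ − β₂ + p_max·β₁·β₂·(M−2))/(2·β₁·β₂·(M−2)))`
and `p₂* = p_max − p₁*`, the pair `(p₁*, p₂*)` is a global maximizer of the
two-user mMIMO sum rate
`R(p₁,p₂) = log₂(1 + (M−2)·β₁·p₁) + log₂(1 + (M−2)·β₂·p₂)`
over `{p₁ ≥ 0, p₂ ≥ 0, p₁ + p₂ ≤ p_max}`. -/
theorem mmimo_two_user_optimal_power
    (M β₁ β₂ pmax : ℝ) (hM : 2 < M) (hβ₂ : 0 < β₂) (hβ : β₂ ≤ β₁)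
    (hpmax : 0 < pmax)
    (R : ℝ → ℝ → ℝ)
    (hR : ∀ p₁ p₂, R p₁ p₂ =
      Real.logb 2 (1 + (M - 2) * β₁ * p₁) +
      Real.logb 2 (1 + (M - 2) * β₂ * p₂))
    (p₁s p₂s : ℝ)
    (hp₁s : p₁s = min pmax
      ((β₁ - β₂ + pmax * β₁ * β₂ * (M - 2)) / (2 * β₁ * β₂ * (M - 2))))
    (hp₂s : p₂s = pmax - p₁s) :
    (0 ≤ p₁s ∧ 0 ≤ p₂s ∧ p₁s + p₂s ≤ pmax) ∧
    (∀ p₁ p₂, 0 ≤ p₁ → 0 ≤ p₂ → p₁ + p₂ ≤ pmax → R p₁ p₂ ≤ R p₁s p₂s) := by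
  have hc : 0 < M - 2 := by linarith
  have hb : 0 < (M - 2) * β₂ := mul_pos hc hβ₂
  have hab : (M - 2) * β₂ ≤ (M - 2) * β₁ := by gcongr
  have hp₁s' : p₁s = min pmax (budgetVertex ((M - 2) * β₁) ((M - 2) * β₂) pmax) := by
    rw [hp₁s, budgetVertex_mul_left hc.ne' (hβ₂.trans_le hβ).ne' hβ₂.ne']
  have hp₁s_nonneg : 0 ≤ p₁s := hp₁s' ▸ le_min hpmax.le (budgetVertex_nonneg hb hab hpmax.le)
  have hp₁s_le : p₁s ≤ pmax := hp₁s' ▸ min_le_left _ _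
  refine ⟨⟨hp₁s_nonneg, by linarith, by linarith⟩, fun p₁ p₂ h₁ h₂ h ↦ ?_⟩
  rw [hR, hR, hp₂s]
  have ha : 0 < (M - 2) * β₁ := hb.trans_le hab
  apply logb_add_logb_le_of_mul_le one_lt_two (by positivity) (by positivity) (by positivity)
    (by nlinarith)
  simpa only [hp₁s', mul_assoc] using mul_budget_le_mul_budget_min_vertex hb hab h₁ h₂ h
end

section
/- Let M > 2 and β₁ ≥ β₂ > 0 and p_max > 0 be real numbers with p_max ≥ (β₁ − β₂) / (β₁·β₂·(M − 2)). Then the supremum of R^mMIMO(p₁, p₂) = log₂(1 + (M − 2)·β₁·p₁) + log₂(1 + (M − 2)·β₂·p₂) over all p₁ ≥ 0, p₂ ≥ 0 with p₁ + p₂ ≤ p_max equals log₂( (β₁ + β₂ + p_max·β₁·β₂·(M − 2))² / (4·β₁·β₂) ). -/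
/-!
Writing `u = 1 + c₁ p₁` and `v = 1 + c₂ p₂`, the sum rate is `log₂ (u v)`, and the power budget
becomes the linear constraint `c₂ u + c₁ v ≤ c₁ + c₂ + c₁ c₂ P =: S`. By AM-GM,
`u v ≤ S² / (4 c₁ c₂)`, with equality when `c₂ u = c₁ v = S / 2`: this is the water-filling
allocation `p₁,₂ = (P ± (c₂⁻¹ - c₁⁻¹)) / 2`, which is feasible exactly when
`|c₂⁻¹ - c₁⁻¹| ≤ P`. For two users `cᵢ = (M - 2) βᵢ`.
-/

open Real

section WaterFilling

variable {c₁ c₂ P : ℝ}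

theorem mul_le_sq_div_of_add_le {a b u v S : ℝ} (ha : 0 < a) (hb : 0 < b)
    (hsum : 0 ≤ a * u + b * v) (hS : a * u + b * v ≤ S) :
    u * v ≤ S ^ 2 / (4 * a * b) := by
  rw [le_div_iff₀ (by positivity)]
  nlinarith [sq_nonneg (a * u - b * v), mul_le_mul hS hS hsum (hsum.trans hS)]

theorem snr_product_le (hc₁ : 0 < c₁) (hc₂ : 0 < c₂) {p₁ p₂ : ℝ} (hp₁ : 0 ≤ p₁) (hp₂ : 0 ≤ p₂)
    (hP : p₁ + p₂ ≤ P) :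
    (1 + c₁ * p₁) * (1 + c₂ * p₂) ≤ (c₁ + c₂ + c₁ * c₂ * P) ^ 2 / (4 * c₂ * c₁) := by
  apply mul_le_sq_div_of_add_le hc₂ hc₁ (by positivity)
  nlinarith [mul_le_mul_of_nonneg_left hP (mul_pos hc₁ hc₂).le]

theorem snr_product_waterFilling (hc₁ : 0 < c₁) (hc₂ : 0 < c₂) :
    (1 + c₁ * ((P + (c₂⁻¹ - c₁⁻¹)) / 2)) * (1 + c₂ * ((P - (c₂⁻¹ - c₁⁻¹)) / 2)) =
      (c₁ + c₂ + c₁ * c₂ * P) ^ 2 / (4 * c₂ * c₁) := by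
  field_simp
  ring

theorem isGreatest_logb_add_logb {b : ℝ} (hb : 1 < b) (hc₁ : 0 < c₁) (hc₂ : 0 < c₂)
    (hP : |c₂⁻¹ - c₁⁻¹| ≤ P) :
    IsGreatest {x : ℝ | ∃ p₁ p₂ : ℝ, 0 ≤ p₁ ∧ 0 ≤ p₂ ∧ p₁ + p₂ ≤ P ∧
        x = logb b (1 + c₁ * p₁) + logb b (1 + c₂ * p₂)}
      (logb b ((c₁ + c₂ + c₁ * c₂ * P) ^ 2 / (4 * c₂ * c₁))) := by
  have logb_add_eq {p₁ p₂ : ℝ} (hp₁ : 0 ≤ p₁) (hp₂ : 0 ≤ p₂) :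
      logb b (1 + c₁ * p₁) + logb b (1 + c₂ * p₂) =
        logb b ((1 + c₁ * p₁) * (1 + c₂ * p₂)) :=
    (logb_mul (by positivity) (by positivity)).symm
  obtain ⟨hd_lower, hd_upper⟩ := abs_le.mp hP
  constructor
  · have hp₁ : 0 ≤ (P + (c₂⁻¹ - c₁⁻¹)) / 2 := by linarith
    have hp₂ : 0 ≤ (P - (c₂⁻¹ - c₁⁻¹)) / 2 := by linarith
    refine ⟨_, _, hp₁, hp₂, by linarith, ?_⟩
    rw [logb_add_eq hp₁ hp₂, snr_product_waterFilling hc₁ hc₂]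
  · rintro x ⟨p₁, p₂, hp₁, hp₂, hsum, rfl⟩
    rw [logb_add_eq hp₁ hp₂]
    exact logb_le_logb_of_le hb (by positivity) (snr_product_le hc₁ hc₂ hp₁ hp₂ hsum)

end WaterFilling

theorem mmimo_two_user_max_sum_rate_interior_general
    (M β₁ β₂ pmax : ℝ) (hM : 2 < M) (hβ₂ : 0 < β₂) (hβ : β₂ ≤ β₁)
    (hbudget : (β₁ - β₂) / (β₁ * β₂ * (M - 2)) ≤ pmax) :
    sSup {x : ℝ | ∃ p₁ p₂ : ℝ, 0 ≤ p₁ ∧ 0 ≤ p₂ ∧ p₁ + p₂ ≤ pmax ∧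
        x = Real.logb 2 (1 + (M - 2) * β₁ * p₁) +
            Real.logb 2 (1 + (M - 2) * β₂ * p₂)} =
    Real.logb 2 ((β₁ + β₂ + pmax * β₁ * β₂ * (M - 2)) ^ 2 / (4 * β₁ * β₂)) := by
  have hβ₁ : 0 < β₁ := hβ₂.trans_le hβ
  have hM₂ : 0 < M - 2 := by linarith
  have hgap : ((M - 2) * β₂)⁻¹ - ((M - 2) * β₁)⁻¹ = (β₁ - β₂) / (β₁ * β₂ * (M - 2)) := by
    field_simp
  have hgap_nonneg : 0 ≤ (β₁ - β₂) / (β₁ * β₂ * (M - 2)) :=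
    div_nonneg (by linarith) (by positivity)
  rw [(isGreatest_logb_add_logb one_lt_two (by positivity) (by positivity)
    (by rwa [hgap, abs_of_nonneg hgap_nonneg])).csSup_eq]
  congr 1
  field_simp

/-- Equation (20): when `p_max ≥ (β₁ − β₂)/(β₁·β₂·(M−2))`, the supremum of the
two-user mMIMO sum rate `log₂(1 + (M−2)·β₁·p₁) + log₂(1 + (M−2)·β₂·p₂)` over
`{p₁ ≥ 0, p₂ ≥ 0, p₁ + p₂ ≤ p_max}` equals
`log₂((β₁ + β₂ + p_max·β₁·β₂·(M−2))²/(4·β₁·β₂))`. -/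
theorem mmimo_two_user_max_sum_rate_interior
    (M β₁ β₂ pmax : ℝ) (hM : 2 < M) (hβ₂ : 0 < β₂) (hβ : β₂ ≤ β₁)
    (hpmax : 0 < pmax) (hbudget : (β₁ - β₂) / (β₁ * β₂ * (M - 2)) ≤ pmax) :
    sSup {x : ℝ | ∃ p₁ p₂ : ℝ, 0 ≤ p₁ ∧ 0 ≤ p₂ ∧ p₁ + p₂ ≤ pmax ∧
        x = Real.logb 2 (1 + (M - 2) * β₁ * p₁) +
            Real.logb 2 (1 + (M - 2) * β₂ * p₂)} =
    Real.logb 2 ((β₁ + β₂ + pmax * β₁ * β₂ * (M - 2)) ^ 2 / (4 * β₁ * β₂)) :=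
  mmimo_two_user_max_sum_rate_interior_general M β₁ β₂ pmax hM hβ₂ hβ hbudget
end

section
/- Let M > 2 and β₁ ≥ β₂ > 0 and p_max > 0 be real numbers with p_max ≤ (β₁ − β₂) / (β₁·β₂·(M − 2)). Then the supremum of R^mMIMO(p₁, p₂) = log₂(1 + (M − 2)·β₁·p₁) + log₂(1 + (M − 2)·β₂·p₂) over all p₁ ≥ 0, p₂ ≥ 0 with p₁ + p₂ ≤ p_max equals log₂(1 + p_max·β₁·(M − 2)), attained at (p₁, p₂) = (p_max, 0). -/
/-! With `a = (M-2)β₁` and `b = (M-2)β₂` the budget condition reads `b (1 + a p_max) ≤ a`: even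
after all power went to the cell-center user, its marginal gain `a / (1 + a p₁)` in the argument of
the logarithm still dominates the gain `b` of the cell-edge user. Hence
`(1 + a p₁)(1 + b p₂) = 1 + a p₁ + p₂ (b + a b p₁) ≤ 1 + a (p₁ + p₂) ≤ 1 + a p_max`,
and taking `log₂` turns the product into the sum rate. -/

theorem one_add_mul_mul_one_add_mul_le {a b x y P : ℝ} (ha : 0 ≤ a) (hb : 0 ≤ b)
    (hy : 0 ≤ y) (hxy : x + y ≤ P) (hbudget : b * (1 + a * P) ≤ a) :
    (1 + a * x) * (1 + b * y) ≤ 1 + a * P := by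
  have hgain : b * (1 + a * x) ≤ a :=
    le_trans (by gcongr; linarith) hbudget
  calc (1 + a * x) * (1 + b * y) = 1 + a * x + y * (b * (1 + a * x)) := by ring
    _ ≤ 1 + a * x + y * a := by gcongr
    _ = 1 + a * (x + y) := by ring
    _ ≤ 1 + a * P := by gcongr

theorem logb_one_add_mul_add_logb_one_add_mul_le {B a b x y P : ℝ} (hB : 1 < B)
    (ha : 0 ≤ a) (hb : 0 ≤ b) (hx : 0 ≤ x) (hy : 0 ≤ y) (hxy : x + y ≤ P)
    (hbudget : b * (1 + a * P) ≤ a) :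
    Real.logb B (1 + a * x) + Real.logb B (1 + b * y) ≤ Real.logb B (1 + a * P) := by
  have hx' : 0 < 1 + a * x := by positivity
  have hy' : 0 < 1 + b * y := by positivity
  rw [← Real.logb_mul hx'.ne' hy'.ne']
  exact Real.logb_le_logb_of_le hB (by positivity)
    (one_add_mul_mul_one_add_mul_le ha hb hy hxy hbudget)

theorem mmimo_two_user_max_sum_rate_corner_general
    (M β₁ β₂ pmax : ℝ) (hM : 2 < M) (hβ₂ : 0 < β₂) (hβ : β₂ ≤ β₁)
    (hbudget : pmax ≤ (β₁ - β₂) / (β₁ * β₂ * (M - 2)))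
    (R : ℝ → ℝ → ℝ)
    (hR : ∀ p₁ p₂, R p₁ p₂ =
      Real.logb 2 (1 + (M - 2) * β₁ * p₁) +
      Real.logb 2 (1 + (M - 2) * β₂ * p₂)) :
    (∀ p₁ p₂, 0 ≤ p₁ → 0 ≤ p₂ → p₁ + p₂ ≤ pmax →
      R p₁ p₂ ≤ Real.logb 2 (1 + pmax * β₁ * (M - 2))) ∧
    R pmax 0 = Real.logb 2 (1 + pmax * β₁ * (M - 2)) := by
  have hM2 : 0 < M - 2 := by linarith
  have hβ₁ : 0 < β₁ := hβ₂.trans_le hβ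
  have hcorner : pmax * β₁ * (M - 2) = (M - 2) * β₁ * pmax := by ring
  have hgain : (M - 2) * β₂ * (1 + (M - 2) * β₁ * pmax) ≤ (M - 2) * β₁ := by
    have := (le_div_iff₀ (by positivity : 0 < β₁ * β₂ * (M - 2))).mp hbudget
    nlinarith
  refine ⟨fun p₁ p₂ hp₁ hp₂ hsum => ?_, ?_⟩
  · rw [hR, hcorner]
    exact logb_one_add_mul_add_logb_one_add_mul_le one_lt_two (by positivity) (by positivity)
      hp₁ hp₂ hsum hgain
  · rw [hR, hcorner, mul_zero, add_zero, Real.logb_one, add_zero]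

/-- Equation (21): when `p_max ≤ (β₁ − β₂)/(β₁·β₂·(M−2))`, the supremum of the
two-user mMIMO sum rate `R(p₁,p₂) = log₂(1 + (M−2)·β₁·p₁) + log₂(1 + (M−2)·β₂·p₂)`
over `{p₁ ≥ 0, p₂ ≥ 0, p₁ + p₂ ≤ p_max}` equals `log₂(1 + p_max·β₁·(M−2))`,
attained at `(p₁, p₂) = (p_max, 0)`. -/
theorem mmimo_two_user_max_sum_rate_corner
    (M β₁ β₂ pmax : ℝ) (hM : 2 < M) (hβ₂ : 0 < β₂) (hβ : β₂ ≤ β₁)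
    (hpmax : 0 < pmax) (hbudget : pmax ≤ (β₁ - β₂) / (β₁ * β₂ * (M - 2)))
    (R : ℝ → ℝ → ℝ)
    (hR : ∀ p₁ p₂, R p₁ p₂ =
      Real.logb 2 (1 + (M - 2) * β₁ * p₁) +
      Real.logb 2 (1 + (M - 2) * β₂ * p₂)) :
    (∀ p₁ p₂, 0 ≤ p₁ → 0 ≤ p₂ → p₁ + p₂ ≤ pmax →
      R p₁ p₂ ≤ Real.logb 2 (1 + pmax * β₁ * (M - 2))) ∧
    R pmax 0 = Real.logb 2 (1 + pmax * β₁ * (M - 2)) :=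
  mmimo_two_user_max_sum_rate_corner_general M β₁ β₂ pmax hM hβ₂ hβ hbudget R hR
end

section
/- Let β₁ ≥ β₂ > 0 and p_max > 0 be real numbers, and define M* = 2 + (β₁ − β₂)/(p_max·β₁·β₂) + 2√2/√(p_max·β₂). Then for every real M ≥ M*, the inequality (β₁ + β₂ + p_max·β₁·β₂·(M − 2))² ≥ 4·β₁·β₂·(1 + p_max·β₁·M) holds. -/
/-- The key algebraic inequality behind equation (23): with
`M* = 2 + (β₁ − β₂)/(p_max·β₁·β₂) + 2√2/√(p_max·β₂)`, for every `M ≥ M*` we have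
`(β₁ + β₂ + p_max·β₁·β₂·(M − 2))² ≥ 4·β₁·β₂·(1 + p_max·β₁·M)`. -/
theorem mmimo_beats_noma_algebraic_ineq
    (β₁ β₂ pmax : ℝ) (hβ₂ : 0 < β₂) (hβ : β₂ ≤ β₁) (hpmax : 0 < pmax)
    (Mstar : ℝ)
    (hMstar : Mstar = 2 + (β₁ - β₂) / (pmax * β₁ * β₂) +
      2 * Real.sqrt 2 / Real.sqrt (pmax * β₂)) :
    ∀ M : ℝ, Mstar ≤ M →
      4 * β₁ * β₂ * (1 + pmax * β₁ * M) ≤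
        (β₁ + β₂ + pmax * β₁ * β₂ * (M - 2)) ^ 2 := by
  intro M hM
  have hβ₁ : 0 < β₁ := lt_of_lt_of_le hβ₂ hβ
  have ha : 0 < pmax * β₁ * β₂ := by positivity
  have hsp : 0 < Real.sqrt (pmax * β₂) := Real.sqrt_pos.mpr (by positivity)
  have hsq2 : Real.sqrt 2 ^ 2 = 2 := Real.sq_sqrt (by norm_num)
  have hsqp : Real.sqrt (pmax * β₂) ^ 2 = pmax * β₂ := Real.sq_sqrt (by positivity)
  set a := pmax * β₁ * β₂ with hadef
  set c := 2 * Real.sqrt 2 * a / Real.sqrt (pmax * β₂) with hc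
  have hc0 : 0 ≤ c := by positivity
  have key : c ≤ a * (M - 2) - (β₁ - β₂) := by
    rw [hMstar] at hM
    have h1 : (β₁ - β₂) / a + 2 * Real.sqrt 2 / Real.sqrt (pmax * β₂) ≤ M - 2 := by
      linarith
    have h2 := mul_le_mul_of_nonneg_left h1 (le_of_lt ha)
    rw [mul_add, mul_div_cancel₀ _ (ne_of_gt ha)] at h2
    have h3 : a * (2 * Real.sqrt 2 / Real.sqrt (pmax * β₂)) = c := by
      rw [hc]; ring
    rw [h3] at h2
    linarith
  have hsq : c ^ 2 ≤ (a * (M - 2) - (β₁ - β₂)) ^ 2 := by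
    nlinarith [key, hc0]
  have hcval : c ^ 2 = 8 * a * β₁ := by
    have e1 : c ^ 2 = (2 * Real.sqrt 2 * a) ^ 2 / Real.sqrt (pmax * β₂) ^ 2 := by
      rw [hc, div_pow]
    have e2 : (2 * Real.sqrt 2 * a) ^ 2 = 8 * a ^ 2 := by
      rw [mul_pow, mul_pow, hsq2]; ring
    rw [e1, e2, hsqp, hadef]
    field_simp
  have final : 8 * a * β₁ ≤ (a * (M - 2) - (β₁ - β₂)) ^ 2 := hcval ▸ hsq
  rw [hadef] at final ⊢
  nlinarith [final]
end

section
/- Let β₁ ≥ β₂ > 0 and p_max > 0 be real numbers, and define M* = 2 + (β₁ − β₂)/(p_max·β₁·β₂) + 2√2/√(p_max·β₂). Then for every real M ≥ M*, the supremum of R^mMIMO(p₁, p₂) = log₂(1 + (M − 2)·β₁·p₁) + log₂(1 + (M − 2)·β₂·p₂) over all p₁ ≥ 0, p₂ ≥ 0 with p₁ + p₂ ≤ p_max is greater than or equal to the supremum of R^NOMA(p₁, p₂) = log₂(1 + M·β₁·p₁) + log₂(1 + β₂·p₂/(1 + β₂·p₁)) over the same feasible set. -/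
set_option maxHeartbeats 2000000 in
/-- Main two-user comparison (equation (23)): for any number of antennas
`M ≥ M* = 2 + (β₁ − β₂)/(p_max·β₁·β₂) + 2√2/√(p_max·β₂)`, the supremum of the
mMIMO sum rate `log₂(1 + (M−2)·β₁·p₁) + log₂(1 + (M−2)·β₂·p₂)` over
`{p₁ ≥ 0, p₂ ≥ 0, p₁ + p₂ ≤ p_max}` is at least the supremum of the NOMA
sum rate `log₂(1 + M·β₁·p₁) + log₂(1 + β₂·p₂/(1 + β₂·p₁))` over the same set. -/
theorem mmimo_outperforms_noma_two_user
    (β₁ β₂ pmax : ℝ) (hβ₂ : 0 < β₂) (hβ : β₂ ≤ β₁) (hpmax : 0 < pmax)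
    (Mstar : ℝ)
    (hMstar : Mstar = 2 + (β₁ - β₂) / (pmax * β₁ * β₂) +
      2 * Real.sqrt 2 / Real.sqrt (pmax * β₂)) :
    ∀ M : ℝ, Mstar ≤ M →
      sSup {x : ℝ | ∃ p₁ p₂ : ℝ, 0 ≤ p₁ ∧ 0 ≤ p₂ ∧ p₁ + p₂ ≤ pmax ∧
            x = Real.logb 2 (1 + M * β₁ * p₁) +
                Real.logb 2 (1 + β₂ * p₂ / (1 + β₂ * p₁))} ≤
      sSup {x : ℝ | ∃ p₁ p₂ : ℝ, 0 ≤ p₁ ∧ 0 ≤ p₂ ∧ p₁ + p₂ ≤ pmax ∧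
            x = Real.logb 2 (1 + (M - 2) * β₁ * p₁) +
                Real.logb 2 (1 + (M - 2) * β₂ * p₂)} := by
  intro M hM
  have hβ₁ : 0 < β₁ := lt_of_lt_of_le hβ₂ hβ
  obtain ⟨s, hsdef⟩ : ∃ s : ℝ, s = Real.sqrt (pmax * β₂) := ⟨_, rfl⟩
  have hs0 : 0 < s := hsdef ▸ Real.sqrt_pos.mpr (by positivity)
  have hs2 : s ^ 2 = pmax * β₂ := hsdef ▸ Real.sq_sqrt (by positivity)
  obtain ⟨r, hrdef⟩ : ∃ r : ℝ, r = Real.sqrt 2 := ⟨_, rfl⟩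
  have hr0 : 0 < r := hrdef ▸ Real.sqrt_pos.mpr (by norm_num)
  have hr2 : r ^ 2 = 2 := hrdef ▸ Real.sq_sqrt (by norm_num)
  obtain ⟨c, hc⟩ : ∃ c : ℝ, c = M - 2 := ⟨_, rfl⟩
  rw [hMstar, ← hsdef, ← hrdef] at hM
  have hab : (β₁ - β₂) / (pmax * β₁ * β₂) + 2 * r / s ≤ c := by
    rw [hc]; linarith
  have ha0 : 0 ≤ (β₁ - β₂) / (pmax * β₁ * β₂) :=
    div_nonneg (by linarith) (by positivity)
  have hc0 : 0 < c := lt_of_lt_of_le (by positivity) hab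
  have hM2 : 2 < M := by rw [hc] at hc0; linarith
  -- key inequality
  have hkey : (β₁ - β₂) + 2 * r * β₁ * s ≤ c * β₁ * β₂ * pmax := by
    have h1 : ((β₁ - β₂) / (pmax * β₁ * β₂) + 2 * r / s) * (pmax * β₁ * β₂)
        ≤ c * (pmax * β₁ * β₂) :=
      mul_le_mul_of_nonneg_right hab (by positivity)
    have h2 : (β₁ - β₂) / (pmax * β₁ * β₂) * (pmax * β₁ * β₂) = β₁ - β₂ :=
      div_mul_cancel₀ _ (by positivity)
    have h3 : 2 * r / s * (pmax * β₁ * β₂) = 2 * r * β₁ * s := by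
      rw [div_mul_eq_mul_div, div_eq_iff (ne_of_gt hs0)]
      linear_combination (-2) * r * β₁ * hs2
    have h4 : ((β₁ - β₂) / (pmax * β₁ * β₂) + 2 * r / s) * (pmax * β₁ * β₂)
        = (β₁ - β₂) + 2 * r * β₁ * s := by rw [add_mul, h2, h3]
    rw [h4] at h1
    linarith [h1]
  have hrs0 : (0:ℝ) ≤ 2 * r * β₁ * s := by positivity
  -- waterfilling point
  have hcb₁ : 0 < c * β₁ := mul_pos hc0 hβ₁
  have hcb₂ : 0 < c * β₂ := mul_pos hc0 hβ₂
  obtain ⟨μ, hμ⟩ : ∃ μ : ℝ, μ = (pmax + 1 / (c * β₁) + 1 / (c * β₂)) / 2 := ⟨_, rfl⟩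
  obtain ⟨q₁, hq₁def⟩ : ∃ q : ℝ, q = μ - 1 / (c * β₁) := ⟨_, rfl⟩
  obtain ⟨q₂, hq₂def⟩ : ∃ q : ℝ, q = μ - 1 / (c * β₂) := ⟨_, rfl⟩
  have hμ0 : 0 < μ := by
    rw [hμ]
    have := one_div_pos.mpr hcb₁
    have := one_div_pos.mpr hcb₂
    linarith
  have hsum : q₁ + q₂ = pmax := by rw [hq₁def, hq₂def, hμ]; ring
  have hq₂0 : 0 ≤ q₂ := by
    have hd : 1 / (c * β₂) - 1 / (c * β₁) = (β₁ - β₂) / (c * β₁ * β₂) := by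
      field_simp
    have hle : (β₁ - β₂) / (c * β₁ * β₂) ≤ pmax := by
      rw [div_le_iff₀ (by positivity)]
      nlinarith [hkey, hrs0]
    rw [hq₂def, hμ]
    linarith [hd, hle]
  have hq₁0 : 0 ≤ q₁ := by
    have h5 : 1 / (c * β₁) ≤ 1 / (c * β₂) :=
      one_div_le_one_div_of_le hcb₂ (by nlinarith)
    rw [hq₁def]; rw [hq₂def] at hq₂0; linarith
  have heq₁ : 1 + c * β₁ * q₁ = c * β₁ * μ := by
    rw [hq₁def, mul_sub, mul_one_div, div_self (ne_of_gt hcb₁)]; ring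
  have heq₂ : 1 + c * β₂ * q₂ = c * β₂ * μ := by
    rw [hq₂def, mul_sub, mul_one_div, div_self (ne_of_gt hcb₂)]; ring
  -- mMIMO value at waterfilling point dominates U := logb 2 (1 + M β₁ pmax)
  have hprod : (1 + M * β₁ * pmax) ≤ (c * β₁ * μ) * (c * β₂ * μ) := by
    have hexp : (c * β₁ * μ) * (c * β₂ * μ)
        = (c * β₁ * β₂ * pmax + β₁ + β₂) ^ 2 / (4 * β₁ * β₂) := by
      rw [hμ]; field_simp; ring
    rw [hexp, le_div_iff₀ (by positivity)]
    have hT : 2 * r * β₁ * s ≤ c * β₁ * β₂ * pmax - (β₁ - β₂) := by linarith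
    have hsq : (2 * r * β₁ * s) ^ 2 ≤ (c * β₁ * β₂ * pmax - (β₁ - β₂)) ^ 2 :=
      pow_le_pow_left₀ hrs0 hT 2
    have hBsq : (2 * r * β₁ * s) ^ 2 = 8 * β₁ ^ 2 * (pmax * β₂) := by
      have h6 : (2 * r * β₁ * s) ^ 2 = 4 * r ^ 2 * β₁ ^ 2 * s ^ 2 := by ring
      rw [h6, hr2, hs2]; ring
    have hMc : M = c + 2 := by rw [hc]; ring
    rw [hMc]; nlinarith [hsq, hBsq]
  -- the mMIMO set is nonempty and bounded above
  rw [← hc]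
  have hbdd : BddAbove {x : ℝ | ∃ p₁ p₂ : ℝ, 0 ≤ p₁ ∧ 0 ≤ p₂ ∧ p₁ + p₂ ≤ pmax ∧
      x = Real.logb 2 (1 + c * β₁ * p₁) +
          Real.logb 2 (1 + c * β₂ * p₂)} := by
    refine ⟨Real.logb 2 (1 + c * β₁ * pmax) + Real.logb 2 (1 + c * β₂ * pmax), ?_⟩
    rintro x ⟨p₁, p₂, h1, h2, h3, rfl⟩
    have e1 : Real.logb 2 (1 + c * β₁ * p₁) ≤ Real.logb 2 (1 + c * β₁ * pmax) :=
      Real.logb_le_logb_of_le one_lt_two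
        (by nlinarith [mul_nonneg hcb₁.le h1])
        (by nlinarith [mul_le_mul_of_nonneg_left (show p₁ ≤ pmax by linarith) hcb₁.le])
    have e2 : Real.logb 2 (1 + c * β₂ * p₂) ≤ Real.logb 2 (1 + c * β₂ * pmax) :=
      Real.logb_le_logb_of_le one_lt_two
        (by nlinarith [mul_nonneg hcb₂.le h2])
        (by nlinarith [mul_le_mul_of_nonneg_left (show p₂ ≤ pmax by linarith) hcb₂.le])
    linarith
  have hmem : Real.logb 2 (1 + c * β₁ * q₁) + Real.logb 2 (1 + c * β₂ * q₂)
      ∈ {x : ℝ | ∃ p₁ p₂ : ℝ, 0 ≤ p₁ ∧ 0 ≤ p₂ ∧ p₁ + p₂ ≤ pmax ∧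
        x = Real.logb 2 (1 + c * β₁ * p₁) +
            Real.logb 2 (1 + c * β₂ * p₂)} :=
    ⟨q₁, q₂, hq₁0, hq₂0, le_of_eq hsum, rfl⟩
  -- value of mMIMO point bounds U
  have hUval : Real.logb 2 (1 + M * β₁ * pmax)
      ≤ Real.logb 2 (1 + c * β₁ * q₁) + Real.logb 2 (1 + c * β₂ * q₂) := by
    rw [heq₁, heq₂,
      ← Real.logb_mul (ne_of_gt (mul_pos hcb₁ hμ0)) (ne_of_gt (mul_pos hcb₂ hμ0))]
    exact Real.logb_le_logb_of_le one_lt_two (by nlinarith [mul_pos hβ₁ hpmax]) hprod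
  -- conclude
  apply csSup_le
  · exact ⟨_, 0, 0, le_refl 0, le_refl 0, by linarith, rfl⟩
  · rintro x ⟨p₁, p₂, h1, h2, h3, rfl⟩
    have hd : (0:ℝ) < 1 + β₂ * p₁ := by positivity
    have hA : (0:ℝ) < 1 + M * β₁ * p₁ := by
      nlinarith [mul_nonneg (mul_nonneg (by linarith : (0:ℝ) ≤ M) hβ₁.le) h1]
    have hB : (0:ℝ) < 1 + β₂ * p₂ / (1 + β₂ * p₁) := by positivity
    have hMb0 : (0:ℝ) ≤ M * β₁ := mul_nonneg (by linarith) hβ₁.le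
    have hMb : β₂ ≤ M * β₁ := by nlinarith [mul_le_mul_of_nonneg_right hM2.le hβ₁.le]
    have hkey2 : (1 + M * β₁ * p₁) * ((1 + β₂ * p₁) + β₂ * p₂)
        ≤ (1 + M * β₁ * pmax) * (1 + β₂ * p₁) := by
      nlinarith [mul_nonneg (mul_nonneg (mul_nonneg hMb0 hβ₂.le) h1)
          (show (0:ℝ) ≤ pmax - p₁ - p₂ by linarith),
        mul_le_mul hMb (show p₂ ≤ pmax - p₁ by linarith) h2 hMb0]
    have hAB : (1 + M * β₁ * p₁) * (1 + β₂ * p₂ / (1 + β₂ * p₁)) ≤ 1 + M * β₁ * pmax := by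
      have heq : (1 + M * β₁ * p₁) * (1 + β₂ * p₂ / (1 + β₂ * p₁))
          = (1 + M * β₁ * p₁) * ((1 + β₂ * p₁) + β₂ * p₂) / (1 + β₂ * p₁) := by
        field_simp
      rw [heq, div_le_iff₀ hd]
      linarith [hkey2]
    calc Real.logb 2 (1 + M * β₁ * p₁) + Real.logb 2 (1 + β₂ * p₂ / (1 + β₂ * p₁))
        = Real.logb 2 ((1 + M * β₁ * p₁) * (1 + β₂ * p₂ / (1 + β₂ * p₁))) :=
          (Real.logb_mul (ne_of_gt hA) (ne_of_gt hB)).symm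
      _ ≤ Real.logb 2 (1 + M * β₁ * pmax) :=
          Real.logb_le_logb_of_le one_lt_two (by positivity) hAB
      _ ≤ Real.logb 2 (1 + c * β₁ * q₁) + Real.logb 2 (1 + c * β₂ * q₂) := hUval
      _ ≤ _ := le_csSup hbdd hmem
end

section
/- Let β₁ ≥ β₂ > 0 and p_max > 0 be real numbers. Then lim_{M → ∞} [ log₂( (β₁ + β₂ + p_max·β₁·β₂·(M − 2))² / (4·β₁·β₂) ) ] / [ log₂(1 + p_max·β₁·M) ] = 2, where M ranges over real numbers tending to infinity. In particular the maximum two-user mMIMO sum rate grows like 2·log₂(M) while the maximum two-user NOMA sum rate grows like log₂(M), so the mMIMO scheme eventually outperforms NOMA by an unbounded margin. -/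
open Filter

private lemma log_linear_div_log (b a : ℝ) (hb : 0 < b) :
    Tendsto (fun M : ℝ => Real.log (b * M + a) / Real.log M) atTop (nhds 1) := by
  have hquot : Tendsto (fun M : ℝ => b + a / M) atTop (nhds b) := by
    have h := Tendsto.div_atTop (tendsto_const_nhds : Tendsto (fun _ : ℝ => a) atTop (nhds a))
      (tendsto_id (α := ℝ))
    simpa using ((tendsto_const_nhds : Tendsto (fun _ : ℝ => b) atTop (nhds b)).add h)
  have hlog : Tendsto (fun M : ℝ => Real.log (b + a / M)) atTop (nhds (Real.log b)) :=
    (Real.continuousAt_log hb.ne').tendsto.comp hquot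
  have h0 : Tendsto (fun M : ℝ => Real.log (b + a / M) / Real.log M) atTop (nhds 0) :=
    hlog.div_atTop Real.tendsto_log_atTop
  have hlim : Tendsto (fun M : ℝ => 1 + Real.log (b + a / M) / Real.log M) atTop (nhds 1) := by
    simpa using ((tendsto_const_nhds : Tendsto (fun _ : ℝ => (1:ℝ)) atTop (nhds 1)).add h0)
  refine hlim.congr' ?_
  filter_upwards [eventually_gt_atTop (max 1 (|a| / b))] with M hM
  have hM1 : 1 < M := lt_of_le_of_lt (le_max_left _ _) hM
  have hM0 : 0 < M := by linarith
  have hba : |a| / b < M := lt_of_le_of_lt (le_max_right _ _) hM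
  have hbMa : 0 < b * M + a := by
    have h1 : |a| < b * M := (div_lt_iff₀ hb).mp hba |>.trans_eq (mul_comm _ _)
    have := neg_abs_le a
    linarith
  have hpos : 0 < b + a / M := by
    have : b + a / M = (b * M + a) / M := by field_simp
    rw [this]; positivity
  have hlogM : Real.log M ≠ 0 := (Real.log_pos hM1).ne'
  have hrw : b * M + a = M * (b + a / M) := by field_simp
  rw [hrw, Real.log_mul hM0.ne' hpos.ne', add_div, div_self hlogM]

/-- Scaling claim after equation (22): as the number of antennas `M → ∞`
(over the reals), the ratio of the maximum two-user mMIMO sum rate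
`log₂((β₁ + β₂ + p_max·β₁·β₂·(M − 2))²/(4·β₁·β₂))` to the maximum two-user
NOMA sum rate `log₂(1 + p_max·β₁·M)` tends to `2`. -/
theorem mmimo_noma_sum_rate_ratio_tendsto_two
    (β₁ β₂ pmax : ℝ) (hβ₂ : 0 < β₂) (hβ : β₂ ≤ β₁) (hpmax : 0 < pmax) :
    Tendsto
      (fun M : ℝ =>
        Real.logb 2 ((β₁ + β₂ + pmax * β₁ * β₂ * (M - 2)) ^ 2 / (4 * β₁ * β₂)) /
          Real.logb 2 (1 + pmax * β₁ * M))
      atTop (nhds 2) := by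
  have hβ₁ : 0 < β₁ := hβ₂.trans_le hβ
  set b : ℝ := pmax * β₁ * β₂ with hbdef
  set d : ℝ := pmax * β₁ with hddef
  set c : ℝ := 4 * β₁ * β₂ with hcdef
  set a : ℝ := β₁ + β₂ - 2 * b with hadef
  have hb : 0 < b := by positivity
  have hd : 0 < d := by positivity
  have hc : 0 < c := by positivity
  have h1 := log_linear_div_log b a hb
  have h2 := log_linear_div_log d 1 hd
  have hc0 : Tendsto (fun M : ℝ => Real.log c / Real.log M) atTop (nhds 0) :=
    tendsto_const_nhds.div_atTop Real.tendsto_log_atTop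
  have hnum : Tendsto
      (fun M : ℝ => (2 * Real.log (b * M + a) - Real.log c) / Real.log M) atTop (nhds 2) := by
    have h := (h1.const_mul 2).sub hc0
    have heq : ∀ M : ℝ, 2 * (Real.log (b * M + a) / Real.log M) - Real.log c / Real.log M
        = (2 * Real.log (b * M + a) - Real.log c) / Real.log M := by
      intro M; rw [sub_div, mul_div_assoc]
    simpa [heq] using h
  have hratio : Tendsto
      (fun M : ℝ => ((2 * Real.log (b * M + a) - Real.log c) / Real.log M) /
        (Real.log (d * M + 1) / Real.log M)) atTop (nhds 2) := by
    have := hnum.div h2 one_ne_zero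
    rw [div_one] at this
    exact this
  refine hratio.congr' ?_
  filter_upwards [eventually_gt_atTop (max 1 (|a| / b))] with M hM
  have hM1 : 1 < M := lt_of_le_of_lt (le_max_left _ _) hM
  have hM0 : 0 < M := by linarith
  have hba : |a| / b < M := lt_of_le_of_lt (le_max_right _ _) hM
  have hX : 0 < b * M + a := by
    have h1' : |a| < b * M := (div_lt_iff₀ hb).mp hba |>.trans_eq (mul_comm _ _)
    have := neg_abs_le a
    linarith
  have hY : 0 < d * M + 1 := by positivity
  have hlogM : Real.log M ≠ 0 := (Real.log_pos hM1).ne'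
  have hlog2 : Real.log 2 ≠ 0 := by
    have : (1:ℝ) < 2 := one_lt_two
    exact (Real.log_pos this).ne'
  have hXeq : β₁ + β₂ + pmax * β₁ * β₂ * (M - 2) = b * M + a := by
    rw [hbdef, hadef, hbdef]; ring
  have hYeq : 1 + pmax * β₁ * M = d * M + 1 := by rw [hddef]; ring
  rw [hXeq, hYeq, Real.logb, Real.logb,
    Real.log_div (by positivity) hc.ne', Real.log_pow]
  push_cast
  have hlogY : Real.log (d * M + 1) ≠ 0 := by
    have : (1:ℝ) < d * M + 1 := by nlinarith
    exact (Real.log_pos this).ne'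
  field_simp
end
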